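/- Let m ≥ 1 and let ℓ, τ be even integers with 0 ≤ ℓ ≤ 4m, 0 ≤ τ ≤ 2m−2, and ℓ + τ ≥ 2m+2. Let x, y be nonnegative integers with x + y ≤ ℓ. Define F(x,y) = Σ (x choose a)·(y choose b)·((ℓ−x−y) choose (2m−τ−a−b)), where the sum is over nonnegative integer pairs (a,b) with a ≤ x, b ≤ y, a+b ≤ 2m−τ, and 2a+b ≥ max(2x+y+2m+1−ℓ−τ, 2m+1−τ). Then F(x,y) ≤ (1/2)·(ℓ choose (2m−τ)) − 1. -/
import Mathlib


/-- The number of "bad" `(2m−τ)`-subsets: `F(x,y) = Σ (x choose a)(y choose b)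
((ℓ−x−y) choose (2m−τ−a−b))` over pairs `(a,b)` with `a ≤ x`, `b ≤ y`,
`a+b ≤ 2m−τ` and `2a+b ≥ max(2x+y+2m+1−ℓ−τ, 2m+1−τ)`. -/
def F (m τ ℓ x y : ℕ) : ℕ :=
  ∑ p ∈ (Finset.range (x + 1) ×ˢ Finset.range (y + 1)).filter
      (fun p => p.1 + p.2 ≤ 2 * m - τ ∧
        max ((2 * x + y + 2 * m + 1 : ℤ) - ℓ - τ) ((2 * m + 1 : ℤ) - τ)
          ≤ ((2 * p.1 + p.2 : ℕ) : ℤ)),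
    x.choose p.1 * y.choose p.2 * (ℓ - x - y).choose (2 * m - τ - p.1 - p.2)

namespace Stmt4Aux

/-- row term -/
def T (x z n a : ℕ) : ℕ := x.choose a * z.choose (n - a)

/-- minimal bad index in a row -/
def al (x z n : ℕ) : ℕ := (max (n+1) (x+n+1-z) + 1) / 2

lemma star (x z n a : ℕ) (h : a < n) :
    T x z n (a+1) * ((a+1) * (z+a+1-n)) = T x z n a * ((x-a) * (n-a)) := by
  have h1 : x.choose (a+1) * (a+1) = x.choose a * (x - a) := Nat.choose_succ_right_eq x a
  have h2 : z.choose (n-a) * (n-a) = z.choose (n-a-1) * (z - (n-a-1)) := by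
    obtain ⟨c, hc⟩ : ∃ c, n - a = c + 1 := ⟨n-a-1, by omega⟩
    rw [hc, Nat.add_sub_cancel]
    exact Nat.choose_succ_right_eq z c
  have h3 : n - (a+1) = n - a - 1 := by omega
  have h4 : z + a + 1 - n = z - (n-a-1) := by omega
  unfold T
  rw [h3, h4]
  calc x.choose (a+1) * z.choose (n-a-1) * ((a+1) * (z - (n-a-1)))
      = (x.choose (a+1) * (a+1)) * (z.choose (n-a-1) * (z - (n-a-1))) := by ring
    _ = (x.choose a * (x-a)) * (z.choose (n-a) * (n-a)) := by rw [h1, ← h2]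
    _ = x.choose a * z.choose (n-a) * ((x-a) * (n-a)) := by ring

lemma refl_le (x z n u : ℕ) (hn : n ≤ 2*u+1) (hxz : x + n ≤ z + 2*u + 1) :
    ∀ j, j ≤ u → u+1+j ≤ n → T x z n (u+1+j) ≤ T x z n (u-j) := by
  intro j
  induction j with
  | zero =>
    intro _ hjn
    simp only [Nat.add_zero, Nat.sub_zero] at *
    have hst := star x z n u (by omega)
    rcases Nat.eq_zero_or_pos (z+u+1-n) with h0 | hpos
    · have : x.choose (u+1) = 0 := Nat.choose_eq_zero_of_lt (by omega)
      unfold T; rw [this]; simp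
    · have hB : (x-u) * (n-u) ≤ (u+1) * (z+u+1-n) := by
        rw [Nat.mul_comm]
        exact Nat.mul_le_mul (by omega) (by omega)
      have : T x z n (u+1) * ((u+1) * (z+u+1-n)) ≤ T x z n u * ((u+1) * (z+u+1-n)) := by
        rw [hst]; exact Nat.mul_le_mul_left _ hB
      exact Nat.le_of_mul_le_mul_right this (by positivity)
  | succ j ih =>
    intro hju hjn
    have ihj : T x z n (u+1+j) ≤ T x z n (u-j) := ih (by omega) (by omega)
    have e1 : u+1+(j+1) = (u+1+j)+1 := by omega
    have e2 : u - (j+1) = u-j-1 := by omega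
    rw [e1, e2]
    rcases Nat.lt_or_ge x ((u+1+j)+1) with hxlt | hxge
    · have h0 : x.choose ((u+1+j)+1) = 0 := Nat.choose_eq_zero_of_lt (by omega)
      unfold T; rw [h0]; simp
    rcases Nat.eq_zero_or_pos (z+(u+1+j)+1-n) with h0 | hpos
    · have hx : x ≤ u - 1 - j := by omega
      have h0' : x.choose ((u+1+j)+1) = 0 := Nat.choose_eq_zero_of_lt (by omega)
      unfold T; rw [h0']; simp
    have hst1 := star x z n (u+1+j) (by omega)
    have hst2 := star x z n (u-j-1) (by omega)
    rw [show u-j-1+1 = u-j from by omega] at hst2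
    have key : (x-(u+1+j)) * (n-(u+1+j)) * ((x-(u-j-1)) * (n-(u-j-1)))
        ≤ (u-j) * (z+(u-j-1)+1-n) * (((u+1+j)+1) * (z+(u+1+j)+1-n)) := by
      have k1 : (x-(u+1+j)) * (x-(u-j-1)) ≤ (z+(u-j-1)+1-n) * (z+(u+1+j)+1-n) := by
        exact Nat.mul_le_mul (by omega) (by omega)
      have k2 : (n-(u+1+j)) * (n-(u-j-1)) ≤ (u-j) * ((u+1+j)+1) := by
        exact Nat.mul_le_mul (by omega) (by omega)
      calc (x-(u+1+j)) * (n-(u+1+j)) * ((x-(u-j-1)) * (n-(u-j-1)))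
          = ((x-(u+1+j)) * (x-(u-j-1))) * ((n-(u+1+j)) * (n-(u-j-1))) := by ring
        _ ≤ ((z+(u-j-1)+1-n) * (z+(u+1+j)+1-n)) * ((u-j) * ((u+1+j)+1)) :=
            Nat.mul_le_mul k1 k2
        _ = (u-j) * (z+(u-j-1)+1-n) * (((u+1+j)+1) * (z+(u+1+j)+1-n)) := by ring
    have hDpos : 0 < (x-(u-j-1)) * (n-(u-j-1)) * (((u+1+j)+1) * (z+(u+1+j)+1-n)) := by
      have c1 : 0 < x-(u-j-1) := by omega
      have c2 : 0 < n-(u-j-1) := by omega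
      have c3 : 0 < (u+1+j)+1 := by omega
      positivity
    have chain : T x z n ((u+1+j)+1) * ((x-(u-j-1)) * (n-(u-j-1)) * (((u+1+j)+1) * (z+(u+1+j)+1-n)))
        ≤ T x z n (u-j-1) * ((x-(u-j-1)) * (n-(u-j-1)) * (((u+1+j)+1) * (z+(u+1+j)+1-n))) := by
      calc T x z n ((u+1+j)+1) * ((x-(u-j-1)) * (n-(u-j-1)) * (((u+1+j)+1) * (z+(u+1+j)+1-n)))
          = (T x z n ((u+1+j)+1) * (((u+1+j)+1) * (z+(u+1+j)+1-n))) * ((x-(u-j-1)) * (n-(u-j-1))) := by ring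
        _ = (T x z n (u+1+j) * ((x-(u+1+j)) * (n-(u+1+j)))) * ((x-(u-j-1)) * (n-(u-j-1))) := by rw [hst1]
        _ ≤ (T x z n (u-j) * ((x-(u+1+j)) * (n-(u+1+j)))) * ((x-(u-j-1)) * (n-(u-j-1))) := by
            apply Nat.mul_le_mul_right
            exact Nat.mul_le_mul_right _ ihj
        _ = T x z n (u-j) * ((x-(u+1+j)) * (n-(u+1+j)) * ((x-(u-j-1)) * (n-(u-j-1)))) := by ring
        _ ≤ T x z n (u-j) * ((u-j) * (z+(u-j-1)+1-n) * (((u+1+j)+1) * (z+(u+1+j)+1-n))) :=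
            Nat.mul_le_mul_left _ key
        _ = (T x z n (u-j) * ((u-j) * (z+(u-j-1)+1-n))) * (((u+1+j)+1) * (z+(u+1+j)+1-n)) := by ring
        _ = (T x z n (u-j-1) * ((x-(u-j-1)) * (n-(u-j-1)))) * (((u+1+j)+1) * (z+(u+1+j)+1-n)) := by rw [hst2]
        _ = T x z n (u-j-1) * ((x-(u-j-1)) * (n-(u-j-1)) * (((u+1+j)+1) * (z+(u+1+j)+1-n))) := by ring
    exact Nat.le_of_mul_le_mul_right
      (by calc T x z n ((u+1+j)+1) * ((x-(u-j-1)) * (n-(u-j-1)) * (((u+1+j)+1) * (z+(u+1+j)+1-n)))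
            ≤ T x z n (u-j-1) * ((x-(u-j-1)) * (n-(u-j-1)) * (((u+1+j)+1) * (z+(u+1+j)+1-n))) := chain) hDpos


/-- `C(x,a) ≥ x+1-a` for `1 ≤ a ≤ x` -/
lemma choose_ge_linear : ∀ x a : ℕ, 1 ≤ a → a ≤ x → x + 1 - a ≤ x.choose a := by
  intro x
  induction x with
  | zero => intro a h1 h2; omega
  | succ x ih =>
    intro a h1 h2
    rcases Nat.eq_or_lt_of_le h1 with h | h
    · simp [← h]
    · obtain ⟨b, rfl⟩ : ∃ b, a = b + 1 := ⟨a-1, by omega⟩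
      have : x.choose b ≥ x + 1 - b := ih b (by omega) (by omega)
      have hp : (x+1).choose (b+1) = x.choose b + x.choose (b+1) := Nat.choose_succ_succ x b
      omega

/-- `C(z,c) ≥ z` for `1 ≤ c ≤ z-1` -/
lemma choose_ge_n : ∀ z c : ℕ, 1 ≤ c → c + 1 ≤ z → z ≤ z.choose c := by
  intro z
  induction z with
  | zero => intro c h1 h2; omega
  | succ z ih =>
    intro c h1 h2
    rcases Nat.eq_or_lt_of_le h1 with h | h
    · simp [← h]
    · obtain ⟨b, rfl⟩ : ∃ b, c = b + 1 := ⟨c-1, by omega⟩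
      have i1 : z ≤ z.choose b := ih b (by omega) (by omega)
      have i2 : 0 < z.choose (b+1) := Nat.choose_pos (by omega)
      have hp : (z+1).choose (b+1) = z.choose b + z.choose (b+1) := Nat.choose_succ_succ z b
      omega

/-- deficit at the bottom of a row, for even n in the middle range -/
lemma deficit (x z n : ℕ) (hE : n % 2 = 0) (h2 : 2 ≤ n) (hP : n + 2 ≤ x + z)
    (hax : al x z n ≤ x) (han : al x z n ≤ n) :
    T x z n (al x z n) + 2 ≤ T x z n (al x z n - 1) := by
  set A := al x z n with hA
  have hAdef : A = (max (n+1) (x+n+1-z) + 1) / 2 := hA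
  have h2A : n + 2 ≤ 2*A := by omega
  have h2Az : x + n + 1 ≤ 2*A + z := by omega
  have hA2 : 2 ≤ A := by omega
  have he2 : 2 ≤ z + A - n := by omega
  set c := n - A with hc
  set e := z + A - n with hee
  set q1 := x + 1 - A with hq1
  set q2 := n + 1 - A with hq2
  have hq2c : q2 = c + 1 := by omega
  have hst := star x z n (A-1) (by omega)
  rw [show A - 1 + 1 = A from by omega] at hst
  rw [show z + (A-1) + 1 - n = e from by omega] at hst
  rw [show x - (A-1) = q1 from by omega] at hst
  rw [show n - (A-1) = q2 from by omega] at hst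
  -- hst : T x z n A * (A * e) = T x z n (A-1) * (q1 * q2)
  have hTq1 : q1 ≤ x.choose A := by
    have := choose_ge_linear x A (by omega) hax
    omega
  have hTzc : 0 < z.choose c := Nat.choose_pos (by omega)
  -- Claim 2 : T A * e ≥ 2 * q1 * q2
  have claim2 : 2 * (q1 * q2) ≤ T x z n A * e := by
    rcases Nat.eq_zero_or_pos c with hc0 | hc1
    · -- c = 0, q2 = 1
      have : T x z n A = x.choose A * 1 := by
        unfold T; rw [← hc, hc0]; simp
      have hq21 : q2 = 1 := by omega
      rw [this, hq21]
      calc 2 * (q1 * 1) = q1 * 2 := by ring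
        _ ≤ x.choose A * e := Nat.mul_le_mul hTq1 (by omega)
        _ = x.choose A * 1 * e := by ring
    · -- c ≥ 1 : C(z,c) ≥ z, z = e + c, (e+c)*e ≥ 2*(c+1)
      have hzc : z ≤ z.choose c := choose_ge_n z c hc1 (by omega)
      have hze : z = e + c := by omega
      have hfe : 2 * (c+1) ≤ (e+c) * e := by nlinarith
      calc 2 * (q1 * q2) = q1 * (2 * (c+1)) := by rw [hq2c]; ring
        _ ≤ x.choose A * ((e+c)*e) := Nat.mul_le_mul hTq1 hfe
        _ = x.choose A * (e+c) * e := by ring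
        _ ≤ x.choose A * z.choose c * e := by
            apply Nat.mul_le_mul_right
            apply Nat.mul_le_mul_left
            omega
        _ = T x z n A * e := by unfold T; rw [← hc]
  -- Claim 1 : A * e ≥ q1*q2 + e
  have claim1 : q1 * q2 + e ≤ A * e := by
    have h1 : q2 + 1 ≤ A := by omega
    have h2' : q1 ≤ e := by omega
    calc q1 * q2 + e ≤ e * q2 + e := by
          have := Nat.mul_le_mul_right q2 h2'
          omega
      _ = (q2 + 1) * e := by ring
      _ ≤ A * e := Nat.mul_le_mul_right e h1
  -- combine
  have main : (T x z n A + 2) * (q1 * q2) ≤ T x z n (A-1) * (q1 * q2) := by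
    calc (T x z n A + 2) * (q1 * q2) = T x z n A * (q1*q2) + 2 * (q1*q2) := by ring
      _ ≤ T x z n A * (q1*q2) + T x z n A * e := by omega
      _ = T x z n A * (q1*q2 + e) := by ring
      _ ≤ T x z n A * (A * e) := Nat.mul_le_mul_left _ claim1
      _ = T x z n (A-1) * (q1 * q2) := hst
  exact Nat.le_of_mul_le_mul_right main (by
    have : 1 ≤ q1 := by omega
    have : 1 ≤ q2 := by omega
    positivity)


/-- the bad part of row n -/
def Srow (x z n : ℕ) : ℕ :=
  ∑ a ∈ Finset.range (x+1), if al x z n ≤ a ∧ a ≤ n then T x z n a else 0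

lemma rowVan (x z n : ℕ) : (x+z).choose n = ∑ a ∈ Finset.range (n+1), T x z n a := by
  rw [Nat.add_choose_eq, Finset.Nat.sum_antidiagonal_eq_sum_range_succ_mk]
  rfl

lemma al_ge (x z n : ℕ) : n + 1 ≤ 2 * al x z n ∧ x + n + 1 ≤ 2 * al x z n + z := by
  unfold al; omega

/-- main per-row inequality machinery.
    `extra = 2` requires even n in middle range; `extra = 0` always. -/
theorem row_le (x z n : ℕ) : 2 * Srow x z n ≤ (x+z).choose n := by
  classical
  set A := al x z n with hA
  have hAup : n + 1 ≤ 2*A ∧ x + n + 1 ≤ 2*A + z := al_ge x z n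
  set B := (Finset.range (x+1)).filter (fun a => A ≤ a ∧ a ≤ n) with hB
  have hSrow : Srow x z n = ∑ a ∈ B, T x z n a := by
    rw [hB, Finset.sum_filter]; rfl
  set φ : ℕ → ℕ := fun a => 2*A - 1 - a with hφ
  have hpt : ∀ a ∈ B, T x z n a ≤ T x z n (φ a) := by
    intro a ha
    simp only [hB, Finset.mem_filter, Finset.mem_range] at ha
    obtain ⟨hax, hAa, han⟩ := ha
    have h1 : a = (A-1) + 1 + (a - A) := by omega
    have h2 : φ a = (A-1) - (a - A) := by simp only [hφ]; omega
    rw [h2]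
    calc T x z n a = T x z n ((A-1)+1+(a-A)) := by rw [← h1]
      _ ≤ T x z n ((A-1) - (a-A)) :=
          refl_le x z n (A-1) (by omega) (by omega) (a-A) (by omega) (by omega)
  have hinj : Set.InjOn φ B := by
    intro a ha b hb h
    simp only [hB, Finset.coe_filter, Finset.mem_range, Set.mem_setOf_eq] at ha hb
    have h2 : 2*A - 1 - a = 2*A - 1 - b := h
    omega
  set G := (Finset.range (x+1)).filter (fun a => a < A ∧ a ≤ n) with hG
  have himg : B.image φ ⊆ G := by
    intro b hb
    simp only [Finset.mem_image] at hb
    obtain ⟨a, ha, rfl⟩ := hb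
    simp only [hB, Finset.mem_filter, Finset.mem_range] at ha
    simp only [hG, Finset.mem_filter, Finset.mem_range]
    constructor
    · show 2*A-1-a < x+1 ; omega
    constructor
    · show 2*A-1-a < A ; omega
    · show 2*A-1-a ≤ n ; omega
  have step1 : ∑ a ∈ B, T x z n a ≤ ∑ a ∈ G, T x z n a := by
    calc ∑ a ∈ B, T x z n a ≤ ∑ a ∈ B, T x z n (φ a) := Finset.sum_le_sum hpt
      _ = ∑ b ∈ B.image φ, T x z n b := (Finset.sum_image (fun a ha b hb h => hinj ha hb h)).symm
      _ ≤ ∑ b ∈ G, T x z n b := Finset.sum_le_sum_of_subset himg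
  have hdisj : Disjoint B G := by
    rw [Finset.disjoint_left]
    intro a haB haG
    simp only [hB, Finset.mem_filter, Finset.mem_range] at haB
    simp only [hG, Finset.mem_filter, Finset.mem_range] at haG
    omega
  have hunion : ∑ a ∈ B, T x z n a + ∑ a ∈ G, T x z n a ≤ (x+z).choose n := by
    rw [← Finset.sum_union hdisj, rowVan]
    apply Finset.sum_le_sum_of_subset
    intro a ha
    simp only [hB, hG, Finset.mem_union, Finset.mem_filter, Finset.mem_range] at ha
    simp only [Finset.mem_range]
    omega
  rw [hSrow]
  omega

theorem row_le2 (x z n : ℕ) (hE : n % 2 = 0) (h2 : 2 ≤ n) (hP : n + 2 ≤ x + z) :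
    2 * Srow x z n + 2 ≤ (x+z).choose n := by
  classical
  set A := al x z n with hA
  have hAup : n + 1 ≤ 2*A ∧ x + n + 1 ≤ 2*A + z := al_ge x z n
  set B := (Finset.range (x+1)).filter (fun a => A ≤ a ∧ a ≤ n) with hB
  have hSrow : Srow x z n = ∑ a ∈ B, T x z n a := by
    rw [hB, Finset.sum_filter]; rfl
  by_cases hBne : B.Nonempty
  · -- bad nonempty : A ≤ x and A ≤ n
    obtain ⟨a0, ha0⟩ := hBne
    have ha0' : a0 < x+1 ∧ A ≤ a0 ∧ a0 ≤ n := by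
      simpa only [hB, Finset.mem_filter, Finset.mem_range] using ha0
    have hax : A ≤ x := by omega
    have han : A ≤ n := by omega
    have hAmem : A ∈ B := by
      simp only [hB, Finset.mem_filter, Finset.mem_range]
      omega
    set φ : ℕ → ℕ := fun a => 2*A - 1 - a with hφ
    have hpt : ∀ a ∈ B, T x z n a ≤ T x z n (φ a) := by
      intro a ha
      simp only [hB, Finset.mem_filter, Finset.mem_range] at ha
      obtain ⟨hax', hAa, han'⟩ := ha
      have h1 : a = (A-1) + 1 + (a - A) := by omega
      have h2' : φ a = (A-1) - (a - A) := by simp only [hφ]; omega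
      rw [h2']
      calc T x z n a = T x z n ((A-1)+1+(a-A)) := by rw [← h1]
        _ ≤ T x z n ((A-1) - (a-A)) :=
            refl_le x z n (A-1) (by omega) (by omega) (a-A) (by omega) (by omega)
    have hdef : T x z n A + 2 ≤ T x z n (φ A) := by
      have : φ A = A - 1 := by simp only [hφ]; omega
      rw [this]
      exact deficit x z n hE h2 hP hax han
    have step0 : ∑ a ∈ B, T x z n a + 2 ≤ ∑ a ∈ B, T x z n (φ a) := by
      rw [← Finset.sum_erase_add B _ hAmem, ← Finset.sum_erase_add B (fun a => T x z n (φ a)) hAmem]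
      have herase : ∑ a ∈ B.erase A, T x z n a ≤ ∑ a ∈ B.erase A, T x z n (φ a) :=
        Finset.sum_le_sum (fun a ha => hpt a (Finset.mem_of_mem_erase ha))
      omega
    have hinj : Set.InjOn φ B := by
      intro a ha b hb h
      simp only [hB, Finset.coe_filter, Finset.mem_range, Set.mem_setOf_eq] at ha hb
      have h2'' : 2*A - 1 - a = 2*A - 1 - b := h
      omega
    set G := (Finset.range (x+1)).filter (fun a => a < A ∧ a ≤ n) with hG
    have himg : B.image φ ⊆ G := by
      intro b hb
      simp only [Finset.mem_image] at hb
      obtain ⟨a, ha, rfl⟩ := hb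
      simp only [hB, Finset.mem_filter, Finset.mem_range] at ha
      simp only [hG, Finset.mem_filter, Finset.mem_range]
      constructor
      · show 2*A-1-a < x+1 ; omega
      constructor
      · show 2*A-1-a < A ; omega
      · show 2*A-1-a ≤ n ; omega
    have step1 : ∑ a ∈ B, T x z n a + 2 ≤ ∑ a ∈ G, T x z n a := by
      calc ∑ a ∈ B, T x z n a + 2 ≤ ∑ a ∈ B, T x z n (φ a) := step0
        _ = ∑ b ∈ B.image φ, T x z n b := (Finset.sum_image (fun a ha b hb h => hinj ha hb h)).symm
        _ ≤ ∑ b ∈ G, T x z n b := Finset.sum_le_sum_of_subset himg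
    have hdisj : Disjoint B G := by
      rw [Finset.disjoint_left]
      intro a haB haG
      simp only [hB, Finset.mem_filter, Finset.mem_range] at haB
      simp only [hG, Finset.mem_filter, Finset.mem_range] at haG
      omega
    have hunion : ∑ a ∈ B, T x z n a + ∑ a ∈ G, T x z n a ≤ (x+z).choose n := by
      rw [← Finset.sum_union hdisj, rowVan]
      apply Finset.sum_le_sum_of_subset
      intro a ha
      simp only [hB, hG, Finset.mem_union, Finset.mem_filter, Finset.mem_range] at ha
      simp only [Finset.mem_range]
      omega
    rw [hSrow]
    omega
  · -- bad empty
    have hS0 : Srow x z n = 0 := by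
      rw [hSrow]
      rw [Finset.not_nonempty_iff_eq_empty] at hBne
      rw [hBne]; rfl
    rw [hS0]
    have : x + z ≤ (x+z).choose n := choose_ge_n (x+z) n (by omega) (by omega)
    omega


lemma Srow_zero_n (x z : ℕ) : Srow x z 0 = 0 := by
  unfold Srow
  apply Finset.sum_eq_zero
  intro a _
  rw [if_neg]
  unfold al
  omega

lemma F_eq_rows (m τ ℓ x y z k : ℕ) (hz : ℓ = x+y+z) (hkτ : τ + k = 2*m) :
    F m τ ℓ x y = ∑ b ∈ Finset.range (y+1), y.choose b * Srow x z (k-b) := by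
  classical
  have hk : 2*m - τ = k := by omega
  unfold F
  rw [Finset.sum_filter, Finset.sum_product_right]
  apply Finset.sum_congr rfl
  intro b hb
  simp only [Finset.mem_range] at hb
  have inner : ∀ a ∈ Finset.range (x+1),
      (if ((a, b).1 + (a, b).2 ≤ 2 * m - τ ∧
        max ((2 * x + y + 2 * m + 1 : ℤ) - ℓ - τ) ((2 * m + 1 : ℤ) - τ)
          ≤ ((2 * (a, b).1 + (a, b).2 : ℕ) : ℤ))
        then x.choose (a, b).1 * y.choose (a, b).2 * (ℓ - x - y).choose (2 * m - τ - (a, b).1 - (a, b).2) else 0)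
      = y.choose b * (if al x z (k-b) ≤ a ∧ a ≤ k-b then T x z (k-b) a else 0) := by
    intro a ha
    simp only [Finset.mem_range] at ha
    have hcond : ((a, b).1 + (a, b).2 ≤ 2 * m - τ ∧
        max ((2 * x + y + 2 * m + 1 : ℤ) - ℓ - τ) ((2 * m + 1 : ℤ) - τ)
          ≤ ((2 * (a, b).1 + (a, b).2 : ℕ) : ℤ))
        ↔ (al x z (k-b) ≤ a ∧ a ≤ k-b) := by
      simp only [max_le_iff]
      unfold al
      constructor
      · rintro ⟨h1, h2, h3⟩
        have h2' : 2*x + y + 2*m + 1 ≤ 2*a + b + ℓ + τ := by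
          push_cast at h2; omega
        have h3' : 2*m + 1 ≤ 2*a + b + τ := by
          push_cast at h3; omega
        omega
      · rintro ⟨h1, h2⟩
        refine ⟨by omega, ?_, ?_⟩
        · push_cast
          omega
        · push_cast
          omega
    rw [if_congr hcond rfl rfl]
    by_cases hc : al x z (k-b) ≤ a ∧ a ≤ k-b
    · rw [if_pos hc, if_pos hc]
      have hzz : ℓ - x - y = z := by omega
      have hnn : 2*m - τ - a - b = (k-b) - a := by omega
      rw [hzz, hnn]
      unfold T
      ring
    · rw [if_neg hc, if_neg hc, mul_zero]
  rw [Finset.sum_congr rfl inner, ← Finset.mul_sum]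
  rfl

lemma rows_range_swap (x z y k : ℕ) :
    ∑ b ∈ Finset.range (y+1), y.choose b * Srow x z (k-b)
      = ∑ b ∈ Finset.range (k+1), y.choose b * Srow x z (k-b) := by
  have h1 : ∑ b ∈ Finset.range (y+1), y.choose b * Srow x z (k-b)
      = ∑ b ∈ Finset.range (max y k + 1), y.choose b * Srow x z (k-b) := by
    apply Finset.sum_subset
    · apply Finset.range_subset_range.mpr; omega
    · intro b _ hb
      simp only [Finset.mem_range] at hb
      have : y.choose b = 0 := Nat.choose_eq_zero_of_lt (by omega)
      rw [this, zero_mul]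
  have h2 : ∑ b ∈ Finset.range (k+1), y.choose b * Srow x z (k-b)
      = ∑ b ∈ Finset.range (max y k + 1), y.choose b * Srow x z (k-b) := by
    apply Finset.sum_subset
    · apply Finset.range_subset_range.mpr; omega
    · intro b _ hb
      simp only [Finset.mem_range] at hb
      have : k - b = 0 := by omega
      rw [this, Srow_zero_n, mul_zero]
  rw [h1, h2]

lemma N_eq_rows (x z y k : ℕ) :
    (y + (x+z)).choose k = ∑ b ∈ Finset.range (k+1), y.choose b * (x+z).choose (k-b) := by
  rw [Nat.add_choose_eq, Finset.Nat.sum_antidiagonal_eq_sum_range_succ_mk]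

lemma sum_slack {s : Finset ℕ} {f g : ℕ → ℕ} (hfg : ∀ b ∈ s, f b ≤ g b)
    {b0 : ℕ} (hb0 : b0 ∈ s) (h0 : f b0 + 2 ≤ g b0) :
    (∑ b ∈ s, f b) + 2 ≤ ∑ b ∈ s, g b := by
  rw [← Finset.sum_erase_add s f hb0, ← Finset.sum_erase_add s g hb0]
  have : ∑ b ∈ s.erase b0, f b ≤ ∑ b ∈ s.erase b0, g b :=
    Finset.sum_le_sum (fun b hb => hfg b (Finset.mem_of_mem_erase hb))
  omega

lemma sum_slack2 {s : Finset ℕ} {f g : ℕ → ℕ} (hfg : ∀ b ∈ s, f b ≤ g b)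
    {b0 b1 : ℕ} (hb0 : b0 ∈ s) (hb1 : b1 ∈ s) (hne : b0 ≠ b1)
    (h0 : f b0 + 1 ≤ g b0) (h1 : f b1 + 1 ≤ g b1) :
    (∑ b ∈ s, f b) + 2 ≤ ∑ b ∈ s, g b := by
  have hb1' : b1 ∈ s.erase b0 := Finset.mem_erase.mpr ⟨hne.symm, hb1⟩
  rw [← Finset.sum_erase_add s f hb0, ← Finset.sum_erase_add s g hb0,
    ← Finset.sum_erase_add (s.erase b0) f hb1', ← Finset.sum_erase_add (s.erase b0) g hb1']
  have : ∑ b ∈ (s.erase b0).erase b1, f b ≤ ∑ b ∈ (s.erase b0).erase b1, g b :=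
    Finset.sum_le_sum (fun b hb => hfg b (Finset.mem_of_mem_erase (Finset.mem_of_mem_erase hb)))
  omega

lemma Srow_empty (x z n : ℕ) (h : 2 * min x n < max (n+1) (x+n+1-z)) : Srow x z n = 0 := by
  unfold Srow
  apply Finset.sum_eq_zero
  intro a ha
  simp only [Finset.mem_range] at ha
  rw [if_neg]
  unfold al
  omega

lemma Srow_single (x z n : ℕ) (hal : al x z n = x) (hxn : x ≤ n) :
    Srow x z n = z.choose (n - x) := by
  unfold Srow
  rw [Finset.sum_eq_single_of_mem x (Finset.self_mem_range_succ x)]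
  · rw [if_pos ⟨le_of_eq hal, hxn⟩]
    unfold T
    rw [Nat.choose_self, one_mul]
  · intro a ha hne
    simp only [Finset.mem_range] at ha
    rw [if_neg]
    intro ⟨h1, h2⟩
    omega


theorem key (x z y k : ℕ) (hk2 : 2 ≤ k) (hkE : k % 2 = 0) (hl : k + 2 ≤ x + y + z) :
    (∑ b ∈ Finset.range (k+1), y.choose b * (2 * Srow x z (k-b))) + 2
      ≤ ∑ b ∈ Finset.range (k+1), y.choose b * (x+z).choose (k-b) := by
  have hfg : ∀ b ∈ Finset.range (k+1),
      y.choose b * (2 * Srow x z (k-b)) ≤ y.choose b * (x+z).choose (k-b) :=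
    fun b _ => Nat.mul_le_mul_left _ (row_le x z (k-b))
  -- helper for "type A" rows
  have typeA : ∀ b0, b0 ∈ Finset.range (k+1) → b0 ≤ y → (k-b0) % 2 = 0 → 2 ≤ k-b0 →
      (k-b0) + 2 ≤ x+z →
      (∑ b ∈ Finset.range (k+1), y.choose b * (2 * Srow x z (k-b))) + 2
        ≤ ∑ b ∈ Finset.range (k+1), y.choose b * (x+z).choose (k-b) := by
    intro b0 hmem hby hE h2 hP
    apply sum_slack hfg hmem
    have hw : 1 ≤ y.choose b0 := Nat.choose_pos hby
    have hrow := row_le2 x z (k-b0) hE h2 hP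
    calc y.choose b0 * (2 * Srow x z (k-b0)) + 2
        ≤ y.choose b0 * (2 * Srow x z (k-b0)) + 2 * y.choose b0 := by omega
      _ = y.choose b0 * (2 * Srow x z (k-b0) + 2) := by ring
      _ ≤ y.choose b0 * ((x+z).choose (k-b0)) := Nat.mul_le_mul_left _ hrow
  rcases le_or_gt (k+2) (x+z) with hP | hP
  · -- Case 1 : P ≥ k+2 : row b0 = 0
    exact typeA 0 (by simp) (by omega) (by omega) (by omega) (by omega)
  · -- Case 2 : P ≤ k+1, y ≥ k+2-(x+z) ≥ 1
    have hy : k+2-(x+z) ≤ y := by omega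
    by_cases hPpar : (x+z) % 2 = 0
    · rcases Nat.lt_or_ge (x+z) 4 with h4 | h4
      · -- P = 0 or P = 2
        rcases (by omega : x + z = 0 ∨ x + z = 2) with hP0 | hP2
        · -- P = 0
          apply sum_slack hfg (b0 := k) (by simp)
          have hn : k - k = 0 := by omega
          rw [hn, Srow_zero_n, mul_zero, mul_zero, Nat.zero_add, Nat.choose_zero_right, mul_one]
          have : y ≤ y.choose k := choose_ge_n y k (by omega) (by omega)
          omega
        · -- P = 2
          apply sum_slack2 hfg (b0 := k) (b1 := k-2) (by simp) (by simp [Finset.mem_range])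
            (by omega)
          · have hn : k - k = 0 := by omega
            rw [hn, Srow_zero_n, mul_zero, mul_zero, Nat.zero_add, Nat.choose_zero_right, mul_one]
            have : 0 < y.choose k := Nat.choose_pos (by omega)
            omega
          · have hn : k - (k-2) = 2 := by omega
            rw [hn, Srow_empty x z 2 (by omega), mul_zero, mul_zero, Nat.zero_add]
            rw [hP2, Nat.choose_self]
            have : 0 < y.choose (k-2) := Nat.choose_pos (by omega)
            omega
      · -- P even ≥ 4 : type A at b0 = k+2-(x+z)
        exact typeA (k+2-(x+z)) (by simp [Finset.mem_range]; omega) (by omega)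
          (by omega) (by omega) (by omega)
    · -- P odd
      rcases (by omega : x+z = 1 ∨ x+z = 3 ∨ 5 ≤ x+z) with hP1 | hP3 | hP5
      · -- P = 1
        apply sum_slack hfg (b0 := k) (by simp)
        have hn : k - k = 0 := by omega
        rw [hn, Srow_zero_n, mul_zero, mul_zero, Nat.zero_add, Nat.choose_zero_right, mul_one]
        have : y ≤ y.choose k := choose_ge_n y k (by omega) (by omega)
        omega
      · -- P = 3
        by_cases hx2 : x = 2
        · -- x = 2, z = 1 : two rows k-2, k-1
          have hz1 : z = 1 := by omega
          apply sum_slack2 hfg (b0 := k-2) (b1 := k-1)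
            (by simp [Finset.mem_range]) (by simp [Finset.mem_range]) (by omega)
          · have hn : k - (k-2) = 2 := by omega
            rw [hn]
            have hal : al x z 2 = 2 := by subst hx2 hz1; rfl
            rw [Srow_single x z 2 (by rw [hal, hx2]) (by omega)]
            rw [show (2 : ℕ) - x = 0 from by omega, Nat.choose_zero_right]
            have hw : 0 < y.choose (k-2) := Nat.choose_pos (by omega)
            rw [show x+z = 3 from by omega]
            have : (3:ℕ).choose 2 = 3 := by rfl
            rw [this]
            omega
          · have hn : k - (k-1) = 1 := by omega
            rw [hn, Srow_empty x z 1 (by omega), mul_zero, mul_zero, Nat.zero_add]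
            rw [show x+z = 3 from by omega]
            have : (3:ℕ).choose 1 = 3 := by rfl
            rw [this]
            have hw : 0 < y.choose (k-1) := Nat.choose_pos (by omega)
            omega
        · -- x ∈ {0,1,3} : single row k-2
          apply sum_slack hfg (b0 := k-2) (by simp [Finset.mem_range])
          have hn : k - (k-2) = 2 := by omega
          rw [hn, Srow_empty x z 2 (by omega), mul_zero, mul_zero, Nat.zero_add]
          rw [show x+z = 3 from by omega]
          have : (3:ℕ).choose 2 = 3 := by rfl
          rw [this]
          have hw : 0 < y.choose (k-2) := Nat.choose_pos (by omega)
          omega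
      · -- P ≥ 5 odd
        by_cases hyL : k+3-(x+z) ≤ y
        · exact typeA (k+3-(x+z)) (by simp [Finset.mem_range]; omega) (by omega)
            (by omega) (by omega) (by omega)
        · -- y = k+2-P exactly
          have hyE : y = k+2-(x+z) := by omega
          rcases lt_trichotomy x z with hxz | hxz | hxz
          · -- x < z : single row b0 = y-1, n = P-1, empty
            apply sum_slack hfg (b0 := y-1) (by simp [Finset.mem_range]; omega)
            have hn : k - (y-1) = x+z-1 := by omega
            rw [hn, Srow_empty x z (x+z-1) (by omega), mul_zero, mul_zero, Nat.zero_add]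
            have hch : (x+z).choose (x+z-1) = x+z := by
              rw [show x+z-1 = (x+z)-1 from rfl, Nat.choose_symm (by omega), Nat.choose_one_right]
            rw [hch]
            have hw : 0 < y.choose (y-1) := Nat.choose_pos (by omega)
            have : 1 * 2 ≤ y.choose (y-1) * (x+z) := Nat.mul_le_mul hw (by omega)
            omega
          · omega
          · -- z < x
            rcases (by omega : z = 0 ∨ z = 1 ∨ 2 ≤ z) with hz0 | hz1 | hz2
            · -- z = 0 : row y-1, empty
              apply sum_slack hfg (b0 := y-1) (by simp [Finset.mem_range]; omega)
              have hn : k - (y-1) = x+z-1 := by omega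
              rw [hn, Srow_empty x z (x+z-1) (by omega), mul_zero, mul_zero, Nat.zero_add]
              have hch : (x+z).choose (x+z-1) = x+z := by
                rw [show x+z-1 = (x+z)-1 from rfl, Nat.choose_symm (by omega), Nat.choose_one_right]
              rw [hch]
              have hw : 0 < y.choose (y-1) := Nat.choose_pos (by omega)
              have : 1 * 2 ≤ y.choose (y-1) * (x+z) := Nat.mul_le_mul hw (by omega)
              omega
            · -- z = 1 : row b0 = y, n = P-2, empty
              apply sum_slack hfg (b0 := y) (by simp [Finset.mem_range]; omega)
              have hn : k - y = x+z-2 := by omega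
              rw [hn, Srow_empty x z (x+z-2) (by omega), mul_zero, mul_zero, Nat.zero_add,
                Nat.choose_self, one_mul]
              have : x+z ≤ (x+z).choose (x+z-2) := by
                rw [show x+z-2 = (x+z)-2 from rfl, Nat.choose_symm (by omega)]
                exact choose_ge_n (x+z) 2 (by omega) (by omega)
              omega
            · -- z ≥ 2 : two rows y-1 and y
              apply sum_slack2 hfg (b0 := y-1) (b1 := y)
                (by simp [Finset.mem_range]; omega) (by simp [Finset.mem_range]; omega) (by omega)
              · -- row n = P-1 : Srow = z, C = P
                have hn : k - (y-1) = x+z-1 := by omega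
                rw [hn]
                have hal : al x z (x+z-1) = x := by unfold al; omega
                rw [Srow_single x z (x+z-1) hal (by omega)]
                rw [show x+z-1-x = z-1 from by omega]
                have hzz : z.choose (z-1) = z := by
                  rw [show z-1 = z-1 from rfl, Nat.choose_symm (by omega), Nat.choose_one_right]
                rw [hzz]
                have hch : (x+z).choose (x+z-1) = x+z := by
                  rw [Nat.choose_symm (n := x+z) (k := 1) (by omega), Nat.choose_one_right]
                rw [hch]
                have hw : 1 ≤ y.choose (y-1) := Nat.choose_pos (by omega)
                calc y.choose (y-1) * (2*z) + 1 ≤ y.choose (y-1) * (2*z) + y.choose (y-1) * (x+z-(2*z)) := by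
                      have : 1 ≤ y.choose (y-1) * (x+z-(2*z)) := Nat.one_le_iff_ne_zero.mpr (by
                        have : 1 ≤ x+z-(2*z) := by omega
                        positivity)
                      omega
                  _ = y.choose (y-1) * (2*z + (x+z-(2*z))) := by ring
                  _ = y.choose (y-1) * (x+z) := by
                      congr 1
                      omega
              · -- row n = P-2 : Srow = C(z,2), C = C(P,2)
                have hn : k - y = x+z-2 := by omega
                rw [hn]
                have hal : al x z (x+z-2) = x := by unfold al; omega
                rw [Srow_single x z (x+z-2) hal (by omega), Nat.choose_self, one_mul]
                rw [show x+z-2-x = z-2 from by omega]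
                have hzz : z.choose (z-2) = z.choose 2 := Nat.choose_symm (by omega)
                rw [hzz]
                have hPP : (x+z).choose (x+z-2) = (x+z).choose 2 := Nat.choose_symm (by omega)
                rw [hPP]
                -- 2*C(z,2)+1 ≤ C(P,2)
                have e1 : 2 * (z.choose 2) = z*(z-1) := by
                  rw [Nat.choose_two_right]
                  have : 2 ∣ z*(z-1) := by
                    rcases Nat.even_or_odd z with h | h
                    · exact Dvd.dvd.mul_right h.two_dvd _
                    · refine Dvd.dvd.mul_left ?_ _
                      have : Even (z-1) := by
                        rcases h with ⟨c, hc⟩; exact ⟨c, by omega⟩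
                      exact this.two_dvd
                  omega
                have e2 : 2 * ((x+z).choose 2) = (x+z)*(x+z-1) := by
                  rw [Nat.choose_two_right]
                  have : 2 ∣ (x+z)*(x+z-1) := by
                    rcases Nat.even_or_odd (x+z) with h | h
                    · exact Dvd.dvd.mul_right h.two_dvd _
                    · refine Dvd.dvd.mul_left ?_ _
                      have : Even (x+z-1) := by
                        rcases h with ⟨c, hc⟩; exact ⟨c, by omega⟩
                      exact this.two_dvd
                  omega
                have goal2 : 2*(z*(z-1)) + 2 ≤ (x+z)*(x+z-1) := by
                  have hx1 : z+1 ≤ x := by omega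
                  zify [show (1:ℕ) ≤ z from by omega, show (1:ℕ) ≤ x+z from by omega]
                  have hxz' : (z:ℤ)+1 ≤ (x:ℤ) := by exact_mod_cast hx1
                  have hz2' : (2:ℤ) ≤ (z:ℤ) := by exact_mod_cast hz2
                  nlinarith [hxz', hz2', sq_nonneg ((x:ℤ)-(z:ℤ))]
                omega
  

theorem main_nat (m τ ℓ x y : ℕ) (hτe : Even τ) (hτ : τ + 2 ≤ 2 * m)
    (hℓτ : 2 * m + 2 ≤ ℓ + τ) (hxy : x + y ≤ ℓ) :
    2 * F m τ ℓ x y + 2 ≤ ℓ.choose (2*m - τ) := by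
  set k := 2*m - τ with hkdef
  set z := ℓ - x - y with hzdef
  have hz : ℓ = x + y + z := by omega
  have hkτ : τ + k = 2*m := by omega
  have hk2 : 2 ≤ k := by omega
  have hkE : k % 2 = 0 := by
    have := Nat.even_iff.mp hτe
    omega
  have hl : k + 2 ≤ x + y + z := by omega
  rw [F_eq_rows m τ ℓ x y z k hz hkτ, rows_range_swap]
  have hN : ℓ.choose k = ∑ b ∈ Finset.range (k+1), y.choose b * (x+z).choose (k-b) := by
    rw [show ℓ = y + (x+z) from by omega, N_eq_rows]
  rw [hN]
  have hL : 2 * (∑ b ∈ Finset.range (k+1), y.choose b * Srow x z (k-b))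
      = ∑ b ∈ Finset.range (k+1), y.choose b * (2 * Srow x z (k-b)) := by
    rw [Finset.mul_sum]
    apply Finset.sum_congr rfl
    intro b _
    ring
  rw [hL]
  exact key x z y k hk2 hkE hl

end Stmt4Aux

theorem stmt_4 (m τ ℓ x y : ℕ) (hm : 1 ≤ m) (hℓe : Even ℓ) (hτe : Even τ)
    (hℓ : ℓ ≤ 4 * m) (hτ : τ + 2 ≤ 2 * m) (hℓτ : 2 * m + 2 ≤ ℓ + τ)
    (hxy : x + y ≤ ℓ) :
    (F m τ ℓ x y : ℚ) ≤ 1 / 2 * (ℓ.choose (2 * m - τ) : ℚ) - 1 := by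
  have h := Stmt4Aux.main_nat m τ ℓ x y hτe hτ hℓτ hxy
  have h' : ((2 * F m τ ℓ x y + 2 : ℕ) : ℚ) ≤ ((ℓ.choose (2*m - τ) : ℕ) : ℚ) := by
    exact_mod_cast h
  push_cast at h'
  linarith
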